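/- Let Φ be an n×d matrix, y = Φx* with s* = supp(x*). Let s be an index set of size k with e = |s* \ s|, let l be an index set of size ℓ disjoint from s, p = s ∪ l, and suppose δ_k < 1. Then ‖Φ_lᵀ y^{⊥s}‖₂ ≤ (1 + δ_e + δ_{ℓ+e} + δ_{e+k}δ_{k+ℓ}/(1 − δ_k)) ‖x*_{l ∩ s*}‖₂ + (δ_e + δ_{ℓ+e} + δ_{e+k}δ_{k+ℓ}/(1 − δ_k)) ‖x*_{s* \ p}‖₂. -/

import Mathlib

open Matrix Finset

noncomputable section

/-- Number of nonzero entries of a vector. -/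
def sparsity {d : ℕ} (x : Fin d → ℝ) : ℕ :=
  (Finset.univ.filter fun i => x i ≠ 0).card

/-- Squared Euclidean norm. -/
def nsq {k : Type*} [Fintype k] (v : k → ℝ) : ℝ := ∑ i, v i ^ 2

/-- Euclidean (ℓ₂) norm. -/
def l2 {k : Type*} [Fintype k] (v : k → ℝ) : ℝ := Real.sqrt (nsq v)

/-- `Φ` satisfies the order-`t` restricted isometry property with constant `δ`. -/
def satRIP {n d : ℕ} (Φ : Matrix (Fin n) (Fin d) ℝ) (t : ℕ) (δ : ℝ) : Prop :=
  ∀ x : Fin d → ℝ, sparsity x ≤ t →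
    (1 - δ) * nsq x ≤ nsq (Φ.mulVec x) ∧ nsq (Φ.mulVec x) ≤ (1 + δ) * nsq x

/-- The order-`t` RIP constant of `Φ` : the smallest `δ ≥ 0` satisfying the RIP bounds. -/
def ripConst {n d : ℕ} (Φ : Matrix (Fin n) (Fin d) ℝ) (t : ℕ) : ℝ :=
  sInf {δ : ℝ | 0 ≤ δ ∧ satRIP Φ t δ}

/-- The submatrix of `Φ` consisting of the columns indexed by `s`. -/
def cols {n d : ℕ} (Φ : Matrix (Fin n) (Fin d) ℝ) (s : Finset (Fin d)) :
    Matrix (Fin n) {i // i ∈ s} ℝ := Φ.submatrix id (fun i => (i : Fin d))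

/-- Orthogonal projection `P{Φ_s} = Φ_s (Φ_sᵀ Φ_s)⁻¹ Φ_sᵀ` onto the column span of `Φ_s`. -/
def proj {n d : ℕ} (Φ : Matrix (Fin n) (Fin d) ℝ) (s : Finset (Fin d)) :
    Matrix (Fin n) (Fin n) ℝ :=
  cols Φ s * ((cols Φ s)ᵀ * cols Φ s)⁻¹ * (cols Φ s)ᵀ

/-- Least-squares residual `v^{⊥s} = (I - P{Φ_s}) v`. -/
def residVec {n d : ℕ} (Φ : Matrix (Fin n) (Fin d) ℝ) (s : Finset (Fin d)) (y : Fin n → ℝ) :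
    Fin n → ℝ := y - (proj Φ s).mulVec y

/-- The `i`-th column of `Φ`. -/
def col {n d : ℕ} (Φ : Matrix (Fin n) (Fin d) ℝ) (i : Fin d) : Fin n → ℝ := fun k => Φ k i

/-- `x` is a least-squares estimate of `y` supported on `s`:
it is supported on `s` and minimizes `‖y - Φ z‖₂` over all `z` supported on `s`. -/
def leastSq {n d : ℕ} (Φ : Matrix (Fin n) (Fin d) ℝ) (y : Fin n → ℝ) (s : Finset (Fin d))
    (x : Fin d → ℝ) : Prop :=
  (∀ i, i ∉ s → x i = 0) ∧
  ∀ z : Fin d → ℝ, (∀ i, i ∉ s → z i = 0) → nsq (y - Φ.mulVec x) ≤ nsq (y - Φ.mulVec z)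

/-- The support of a vector, as a `Finset`. -/
def spt {d : ℕ} (x : Fin d → ℝ) : Finset (Fin d) :=
  Finset.univ.filter fun i => x i ≠ 0

/-!
Write `x* = x*_s + u + w` with `u = x*_{l ∩ s*}` and `w = x*_{s* \ p}`. The projection fixes
`Φ x*_s`, so the residual is `(I - P)Φ(u + w)`, and the four terms `Φ_lᵀ Φ u`, `Φ_lᵀ P Φ u`,
`Φ_lᵀ Φ w`, `Φ_lᵀ P Φ w` are bounded separately. By duality, `‖q_a‖₂ ≤ C` as soon as
`|⟨v, q⟩| ≤ C ‖v‖₂` for every `v` supported on `a`, so every bound reduces to the polarized RIP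
estimate `|⟨Φx, Φy⟩ - ⟨x, y⟩| ≤ δ_t ‖x‖₂ ‖y‖₂` for `x, y` supported on a common set of size `t`.
For the projected terms, `P Φ y = Φ ζ` with `ζ` supported on `s` and `Φ y - Φ ζ` orthogonal to
`Φ_s`, whence `(1 - δ_k) ‖ζ‖₂² ≤ ‖Φ ζ‖₂² = ⟨Φ ζ, Φ y⟩ ≤ δ_{e+k} ‖ζ‖₂ ‖y‖₂`.
-/

namespace RIP

section Euclidean

variable {κ : Type*} [Fintype κ]

lemma nsq_eq_dotProduct (v : κ → ℝ) : nsq v = v ⬝ᵥ v := by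
  simp [nsq, dotProduct, sq]

lemma l2_eq_norm (v : κ → ℝ) : l2 v = ‖WithLp.toLp 2 v‖ := by
  simp [l2, nsq, EuclideanSpace.norm_eq]

lemma nsq_nonneg (v : κ → ℝ) : 0 ≤ nsq v := Finset.sum_nonneg fun _ _ => sq_nonneg _

lemma l2_nonneg (v : κ → ℝ) : 0 ≤ l2 v := Real.sqrt_nonneg _

lemma l2_sq (v : κ → ℝ) : l2 v ^ 2 = nsq v := Real.sq_sqrt (nsq_nonneg v)

lemma l2_add_le (v w : κ → ℝ) : l2 (v + w) ≤ l2 v + l2 w := by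
  simpa only [l2_eq_norm, WithLp.toLp_add] using norm_add_le _ _

lemma l2_sub_le (v w : κ → ℝ) : l2 (v - w) ≤ l2 v + l2 w := by
  simpa only [l2_eq_norm, WithLp.toLp_sub] using norm_sub_le _ _

lemma l2_smul (c : ℝ) (v : κ → ℝ) : l2 (c • v) = |c| * l2 v := by
  simp only [l2_eq_norm, WithLp.toLp_smul, norm_smul, Real.norm_eq_abs]

lemma l2_eq_zero {v : κ → ℝ} : l2 v = 0 ↔ v = 0 := by
  simp [l2_eq_norm]

end Euclidean

variable {n d : ℕ}

section Support

lemma spt_subset_iff {x : Fin d → ℝ} {a : Finset (Fin d)} :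
    spt x ⊆ a ↔ ∀ i ∉ a, x i = 0 := by
  simp only [spt, Finset.subset_iff, Finset.mem_filter, Finset.mem_univ, true_and]
  exact ⟨fun h i hi => by_contra fun hx => hi (h hx), fun h i hx => by_contra fun hi => hx (h i hi)⟩

lemma sparsity_le_card {x : Fin d → ℝ} {a : Finset (Fin d)} (h : spt x ⊆ a) :
    sparsity x ≤ a.card :=
  Finset.card_le_card h

lemma spt_indicator_subset (a : Finset (Fin d)) (v : Fin d → ℝ) :
    spt ((a : Set (Fin d)).indicator v) ⊆ a :=
  spt_subset_iff.2 fun _ hi => Set.indicator_of_notMem (by simpa using hi) _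

lemma dotProduct_eq_zero_of_disjoint {x y : Fin d → ℝ} {a b : Finset (Fin d)} (hx : spt x ⊆ a)
    (hy : spt y ⊆ b) (hab : Disjoint a b) : x ⬝ᵥ y = 0 :=
  Finset.sum_eq_zero fun i _ => by
    by_cases hi : i ∈ a
    · simp [spt_subset_iff.1 hy i (Finset.disjoint_left.1 hab hi)]
    · simp [spt_subset_iff.1 hx i hi]

lemma nsq_indicator (a : Finset (Fin d)) (v : Fin d → ℝ) :
    nsq ((a : Set (Fin d)).indicator v) = ∑ i ∈ a, v i ^ 2 := by
  rw [nsq, ← Finset.sum_indicator_subset _ a.subset_univ]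
  refine Finset.sum_congr rfl fun i _ => ?_
  by_cases hi : i ∈ a <;> simp [hi]

lemma l2_indicator_eq_sqrt (a : Finset (Fin d)) (v : Fin d → ℝ) :
    l2 ((a : Set (Fin d)).indicator v) = √(∑ i ∈ a, v i ^ 2) := by
  rw [l2, nsq_indicator]

lemma indicator_add_indicator_add_indicator_eq (x : Fin d → ℝ) {s l : Finset (Fin d)}
    (hls : Disjoint l s) :
    (s : Set (Fin d)).indicator x + ((l ∩ spt x : Finset (Fin d)) : Set (Fin d)).indicator x +
      ((spt x \ (s ∪ l) : Finset (Fin d)) : Set (Fin d)).indicator x = x := by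
  funext i
  have := @Finset.disjoint_left.1 hls i
  by_cases hs : i ∈ s <;> by_cases hl : i ∈ l <;> by_cases hx : x i = 0 <;>
    simp_all [spt]

lemma l2_indicator_le (a : Finset (Fin d)) (v : Fin d → ℝ) :
    l2 ((a : Set (Fin d)).indicator v) ≤ l2 v := by
  refine Real.sqrt_le_sqrt (Finset.sum_le_sum fun i _ => ?_)
  by_cases hi : i ∈ a <;> simp [hi, sq_nonneg]

lemma indicator_dotProduct_self (a : Finset (Fin d)) (v : Fin d → ℝ) :
    (a : Set (Fin d)).indicator v ⬝ᵥ v = nsq ((a : Set (Fin d)).indicator v) := by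
  rw [nsq_eq_dotProduct]
  refine Finset.sum_congr rfl fun i _ => ?_
  by_cases hi : i ∈ a <;> simp [hi]

lemma l2_indicator_le_of_forall {a : Finset (Fin d)} {q : Fin d → ℝ} {C : ℝ} (hC : 0 ≤ C)
    (h : ∀ v : Fin d → ℝ, spt v ⊆ a → |v ⬝ᵥ q| ≤ C * l2 v) :
    l2 ((a : Set (Fin d)).indicator q) ≤ C := by
  set v := (a : Set (Fin d)).indicator q
  have hv : l2 v * l2 v ≤ C * l2 v := by
    calc l2 v * l2 v = v ⬝ᵥ q := by rw [← sq, l2_sq, indicator_dotProduct_self]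
      _ ≤ |v ⬝ᵥ q| := le_abs_self _
      _ ≤ C * l2 v := h v (spt_indicator_subset a q)
  rcases (l2_nonneg v).eq_or_lt with h0 | hpos
  · rw [← h0]; exact hC
  · exact le_of_mul_le_mul_right hv hpos

end Support

section Constants

variable (Φ : Matrix (Fin n) (Fin d) ℝ)

lemma exists_satRIP (t : ℕ) : ∃ δ : ℝ, 0 ≤ δ ∧ satRIP Φ t δ := by
  set C := ∑ i, ∑ j, Φ i j ^ 2
  have hC : 0 ≤ C := by positivity
  refine ⟨1 + C, by positivity, fun x _ => ⟨?_, ?_⟩⟩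
  · nlinarith [nsq_nonneg x, nsq_nonneg (Φ *ᵥ x)]
  · have hrow : ∀ i, (Φ *ᵥ x) i ^ 2 ≤ (∑ j, Φ i j ^ 2) * nsq x := fun i => by
      simpa [mulVec, dotProduct, nsq] using
        Finset.sum_mul_sq_le_sq_mul_sq Finset.univ (fun j => Φ i j) x
    have : nsq (Φ *ᵥ x) ≤ C * nsq x := by
      rw [nsq, Finset.sum_mul]
      exact Finset.sum_le_sum fun i _ => hrow i
    nlinarith [nsq_nonneg x]

lemma ripConst_nonneg (t : ℕ) : 0 ≤ ripConst Φ t :=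
  le_csInf (exists_satRIP Φ t) fun _ hδ => hδ.1

lemma satRIP_ripConst (t : ℕ) : satRIP Φ t (ripConst Φ t) := by
  have hclosed : IsClosed {δ : ℝ | 0 ≤ δ ∧ satRIP Φ t δ} := by
    simp only [satRIP, Set.ofPred_and, Set.ofPred_forall]
    refine isClosed_Ici.inter (isClosed_iInter fun x => isClosed_iInter fun _ => ?_)
    exact (isClosed_le (by fun_prop) continuous_const).inter
      (isClosed_le continuous_const (by fun_prop))
  exact (hclosed.csInf_mem (exists_satRIP Φ t) ⟨0, fun _ hδ => hδ.1⟩).2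

lemma ripConst_mono {t t' : ℕ} (h : t ≤ t') : ripConst Φ t ≤ ripConst Φ t' :=
  csInf_le_csInf ⟨0, fun _ hδ => hδ.1⟩ (exists_satRIP Φ t') fun _ ⟨hδ, hR⟩ =>
    ⟨hδ, fun x hx => hR x (hx.trans h)⟩

end Constants

end RIP

namespace satRIP

open RIP

variable {n d : ℕ} {Φ : Matrix (Fin n) (Fin d) ℝ} {t : ℕ} {δ : ℝ}
  {x y : Fin d → ℝ} {a b : Finset (Fin d)}

lemma abs_dotProduct_mulVec_sub_le_half (hR : satRIP Φ t δ) (hx : spt x ⊆ a) (hy : spt y ⊆ a)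
    (ha : a.card ≤ t) :
    |Φ *ᵥ x ⬝ᵥ Φ *ᵥ y - x ⬝ᵥ y| ≤ δ * (nsq x + nsq y) / 2 := by
  have hsum := hR (x + y) ((sparsity_le_card (spt_subset_iff.2 fun i hi => by
    simp [spt_subset_iff.1 hx i hi, spt_subset_iff.1 hy i hi])).trans ha)
  have hdiff := hR (x - y) ((sparsity_le_card (spt_subset_iff.2 fun i hi => by
    simp [spt_subset_iff.1 hx i hi, spt_subset_iff.1 hy i hi])).trans ha)
  simp only [nsq_eq_dotProduct, mulVec_add, mulVec_sub, add_dotProduct, dotProduct_add,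
    sub_dotProduct, dotProduct_sub, dotProduct_comm y x, dotProduct_comm (Φ *ᵥ y)] at hsum hdiff ⊢
  rw [abs_le]
  constructor <;> linarith [hsum.1, hsum.2, hdiff.1, hdiff.2]

lemma abs_dotProduct_mulVec_sub_le (hR : satRIP Φ t δ) (hx : spt x ⊆ a) (hy : spt y ⊆ a)
    (ha : a.card ≤ t) :
    |Φ *ᵥ x ⬝ᵥ Φ *ᵥ y - x ⬝ᵥ y| ≤ δ * (l2 x * l2 y) := by
  rcases eq_or_ne x 0 with rfl | hx0
  · simp [l2_eq_norm]
  rcases eq_or_ne y 0 with rfl | hy0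
  · simp [l2_eq_norm]
  have hpos : ∀ {v : Fin d → ℝ}, v ≠ 0 → 0 < l2 v := fun hv =>
    (l2_nonneg _).lt_of_ne' (l2_eq_zero.not.2 hv)
  have hunit : ∀ {v : Fin d → ℝ}, v ≠ 0 → nsq ((l2 v)⁻¹ • v) = 1 := fun hv => by
    rw [← l2_sq, l2_smul, abs_inv, abs_of_pos (hpos hv), inv_mul_cancel₀ (hpos hv).ne', one_pow]
  have hspt : ∀ {v : Fin d → ℝ} (c : ℝ), spt v ⊆ a → spt (c • v) ⊆ a := fun c hv =>
    spt_subset_iff.2 fun i hi => by simp [spt_subset_iff.1 hv i hi]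
  have key := hR.abs_dotProduct_mulVec_sub_le_half (hspt (l2 x)⁻¹ hx) (hspt (l2 y)⁻¹ hy) ha
  rw [hunit hx0, hunit hy0] at key
  have hscale : Φ *ᵥ x ⬝ᵥ Φ *ᵥ y - x ⬝ᵥ y = l2 x * l2 y *
      (Φ *ᵥ ((l2 x)⁻¹ • x) ⬝ᵥ Φ *ᵥ ((l2 y)⁻¹ • y) - (l2 x)⁻¹ • x ⬝ᵥ (l2 y)⁻¹ • y) := by
    simp only [mulVec_smul, smul_dotProduct, dotProduct_smul, smul_eq_mul]
    field_simp [(hpos hx0).ne', (hpos hy0).ne']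
  rw [hscale, abs_mul, abs_of_pos (mul_pos (hpos hx0) (hpos hy0))]
  nlinarith [mul_pos (hpos hx0) (hpos hy0)]

lemma l2_indicator_transpose_mulVec_sub_le (hR : satRIP Φ t δ) (hδ : 0 ≤ δ) (hy : spt y ⊆ b)
    (hab : (a ∪ b).card ≤ t) :
    l2 ((a : Set (Fin d)).indicator (Φᵀ *ᵥ (Φ *ᵥ y) - y)) ≤ δ * l2 y := by
  refine l2_indicator_le_of_forall (mul_nonneg hδ (l2_nonneg y)) fun v hv => ?_
  rw [dotProduct_sub, dotProduct_mulVec, vecMul_transpose, mul_right_comm, mul_assoc]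
  exact hR.abs_dotProduct_mulVec_sub_le (hv.trans Finset.subset_union_left)
    (hy.trans Finset.subset_union_right) hab

lemma l2_indicator_transpose_mulVec_le_of_disjoint (hR : satRIP Φ t δ) (hδ : 0 ≤ δ)
    (hy : spt y ⊆ b) (hab : Disjoint a b) (hcard : a.card + b.card ≤ t) :
    l2 ((a : Set (Fin d)).indicator (Φᵀ *ᵥ (Φ *ᵥ y))) ≤ δ * l2 y := by
  have hya : (a : Set (Fin d)).indicator y = 0 := funext fun i =>
    Set.indicator_apply_eq_zero.2 fun hi => spt_subset_iff.1 hy i (Finset.disjoint_left.1 hab hi)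
  have := hR.l2_indicator_transpose_mulVec_sub_le hδ hy
    ((Finset.card_union_of_disjoint hab).trans_le hcard)
  rwa [Set.indicator_sub', hya, sub_zero] at this

lemma l2_indicator_transpose_mulVec_le (hR : satRIP Φ t δ) (hδ : 0 ≤ δ) (hy : spt y ⊆ a)
    (ha : a.card ≤ t) :
    l2 ((a : Set (Fin d)).indicator (Φᵀ *ᵥ (Φ *ᵥ y))) ≤ (1 + δ) * l2 y := by
  have hsplit : (a : Set (Fin d)).indicator (Φᵀ *ᵥ (Φ *ᵥ y)) =
      (a : Set (Fin d)).indicator (Φᵀ *ᵥ (Φ *ᵥ y) - y) + (a : Set (Fin d)).indicator y := by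
    rw [← Set.indicator_add', sub_add_cancel]
  rw [hsplit, add_mul, one_mul, add_comm (l2 y)]
  exact (l2_add_le _ _).trans (add_le_add
    (hR.l2_indicator_transpose_mulVec_sub_le hδ hy (by rwa [Finset.union_self]))
    (l2_indicator_le a y))

end satRIP

namespace RIP

variable {n d : ℕ} {Φ : Matrix (Fin n) (Fin d) ℝ} {s : Finset (Fin d)}

lemma mulVec_eq_cols_mulVec {z : Fin d → ℝ} (hz : spt z ⊆ s) :
    Φ *ᵥ z = cols Φ s *ᵥ fun j => z j := by
  funext i
  simp only [mulVec, dotProduct, cols, submatrix_apply, id]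
  rw [← Finset.sum_subset s.subset_univ fun j _ hj => by simp [spt_subset_iff.1 hz j hj],
    ← Finset.sum_coe_sort s]

lemma spt_extend_subset (v : s → ℝ) : spt (Subtype.val.extend v 0) ⊆ s :=
  spt_subset_iff.2 fun _ hi =>
    Function.extend_apply' _ _ _ fun ⟨j, hj⟩ => hi (hj ▸ j.2)

lemma cols_mulVec_eq_mulVec_extend (v : s → ℝ) :
    cols Φ s *ᵥ v = Φ *ᵥ Subtype.val.extend v 0 := by
  rw [mulVec_eq_cols_mulVec (spt_extend_subset v)]
  simp only [Subtype.val_injective.extend_apply]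

lemma exists_proj_mulVec_eq (w : Fin n → ℝ) :
    ∃ ζ : Fin d → ℝ, spt ζ ⊆ s ∧ proj Φ s *ᵥ w = Φ *ᵥ ζ :=
  ⟨_, spt_extend_subset _, by
    rw [proj, ← mulVec_mulVec, ← mulVec_mulVec, cols_mulVec_eq_mulVec_extend]⟩

lemma isUnit_det_gram {δ : ℝ} (hR : satRIP Φ s.card δ) (hδ : δ < 1) :
    IsUnit ((cols Φ s)ᵀ * cols Φ s).det := by
  rw [isUnit_iff_ne_zero, Ne, ← exists_mulVec_eq_zero_iff]
  rintro ⟨v, hv, hGv⟩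
  set ζ : Fin d → ℝ := Subtype.val.extend v 0
  have hΦζ : nsq (Φ *ᵥ ζ) = 0 := by
    have := congrArg (v ⬝ᵥ ·) hGv
    rw [dotProduct_zero, ← mulVec_mulVec, dotProduct_mulVec, vecMul_transpose] at this
    rwa [← cols_mulVec_eq_mulVec_extend, nsq_eq_dotProduct]
  have hζ : nsq ζ = 0 := by
    have := (hR ζ (sparsity_le_card (spt_extend_subset v))).1
    nlinarith [nsq_nonneg ζ]
  refine hv (funext fun j => ?_)
  rw [← l2_sq, sq_eq_zero_iff, l2_eq_zero] at hζ
  simpa [ζ, Subtype.val_injective.extend_apply] using congr_fun hζ j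

section Projection

variable (hG : IsUnit ((cols Φ s)ᵀ * cols Φ s).det)
include hG

lemma transpose_cols_mul_proj : (cols Φ s)ᵀ * proj Φ s = (cols Φ s)ᵀ := by
  rw [proj, ← Matrix.mul_assoc, ← Matrix.mul_assoc, mul_nonsing_inv _ hG, Matrix.one_mul]

lemma proj_mul_cols : proj Φ s * cols Φ s = cols Φ s := by
  rw [proj, Matrix.mul_assoc, Matrix.mul_assoc, nonsing_inv_mul _ hG, Matrix.mul_one]

lemma proj_mulVec_mulVec_of_spt_subset {z : Fin d → ℝ} (hz : spt z ⊆ s) :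
    proj Φ s *ᵥ (Φ *ᵥ z) = Φ *ᵥ z := by
  rw [mulVec_eq_cols_mulVec hz, mulVec_mulVec, proj_mul_cols hG]

lemma mulVec_dotProduct_proj_mulVec {v : Fin d → ℝ} (hv : spt v ⊆ s) (w : Fin n → ℝ) :
    Φ *ᵥ v ⬝ᵥ proj Φ s *ᵥ w = Φ *ᵥ v ⬝ᵥ w := by
  rw [mulVec_eq_cols_mulVec hv, ← vecMul_transpose, ← dotProduct_mulVec, ← dotProduct_mulVec,
    mulVec_mulVec, transpose_cols_mul_proj hG]

lemma residVec_mulVec_of_spt_subset {z : Fin d → ℝ} (hz : spt z ⊆ s) :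
    residVec Φ s (Φ *ᵥ z) = 0 := by
  rw [residVec, proj_mulVec_mulVec_of_spt_subset hG hz, sub_self]

end Projection

lemma residVec_add (y y' : Fin n → ℝ) :
    residVec Φ s (y + y') = residVec Φ s y + residVec Φ s y' := by
  simp only [residVec, mulVec_add]
  abel

variable {a b : Finset (Fin d)} {y : Fin d → ℝ} {t₁ t₂ : ℕ}

section ProjectionBound

variable (hδs : ripConst Φ s.card < 1) (hy : spt y ⊆ b) (hsb : Disjoint s b)
  (hcard₁ : s.card + b.card ≤ t₁)
include hδs hy hsb hcard₁

lemma l2_le_of_proj_mulVec_eq {ζ : Fin d → ℝ} (hζ : spt ζ ⊆ s)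
    (hPζ : proj Φ s *ᵥ (Φ *ᵥ y) = Φ *ᵥ ζ) :
    l2 ζ ≤ ripConst Φ t₁ * l2 y / (1 - ripConst Φ s.card) := by
  have hcross : nsq (Φ *ᵥ ζ) = Φ *ᵥ ζ ⬝ᵥ Φ *ᵥ y - ζ ⬝ᵥ y := by
    rw [nsq_eq_dotProduct, ← mulVec_dotProduct_proj_mulVec
      (isUnit_det_gram (satRIP_ripConst Φ _) hδs) hζ (Φ *ᵥ y), hPζ,
      dotProduct_eq_zero_of_disjoint hζ hy hsb, sub_zero]
  have hlower := (satRIP_ripConst Φ s.card ζ (sparsity_le_card hζ)).1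
  have hupper := (satRIP_ripConst Φ t₁).abs_dotProduct_mulVec_sub_le (a := s ∪ b)
    (hζ.trans Finset.subset_union_left) (hy.trans Finset.subset_union_right)
    ((Finset.card_union_le s b).trans hcard₁)
  rw [← l2_sq, hcross] at hlower
  rw [le_div_iff₀ (sub_pos.2 hδs)]
  rcases (l2_nonneg ζ).eq_or_lt with h0 | hpos
  · rw [← h0, zero_mul]
    exact mul_nonneg (ripConst_nonneg Φ t₁) (l2_nonneg y)
  · refine le_of_mul_le_mul_right ?_ hpos
    nlinarith [le_abs_self (Φ *ᵥ ζ ⬝ᵥ Φ *ᵥ y - ζ ⬝ᵥ y)]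

variable (has : Disjoint a s) (hcard₂ : s.card + a.card ≤ t₂)
include has hcard₂

lemma l2_indicator_transpose_proj_mulVec_le :
    l2 ((a : Set (Fin d)).indicator (Φᵀ *ᵥ (proj Φ s *ᵥ (Φ *ᵥ y)))) ≤
      ripConst Φ t₁ * ripConst Φ t₂ / (1 - ripConst Φ s.card) * l2 y := by
  obtain ⟨ζ, hζ, hPζ⟩ := exists_proj_mulVec_eq (s := s) (Φ *ᵥ y)
  rw [hPζ]
  calc l2 ((a : Set (Fin d)).indicator (Φᵀ *ᵥ (Φ *ᵥ ζ))) ≤ ripConst Φ t₂ * l2 ζ :=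
        (satRIP_ripConst Φ t₂).l2_indicator_transpose_mulVec_le_of_disjoint
          (ripConst_nonneg Φ t₂) hζ has (by omega)
    _ ≤ ripConst Φ t₂ * (ripConst Φ t₁ * l2 y / (1 - ripConst Φ s.card)) := by
        gcongr
        · exact ripConst_nonneg Φ t₂
        · exact l2_le_of_proj_mulVec_eq hδs hy hsb hcard₁ hζ hPζ
    _ = ripConst Φ t₁ * ripConst Φ t₂ / (1 - ripConst Φ s.card) * l2 y := by ring

lemma l2_indicator_transpose_residVec_le :
    l2 ((a : Set (Fin d)).indicator (Φᵀ *ᵥ residVec Φ s (Φ *ᵥ y))) ≤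
      l2 ((a : Set (Fin d)).indicator (Φᵀ *ᵥ (Φ *ᵥ y))) +
        ripConst Φ t₁ * ripConst Φ t₂ / (1 - ripConst Φ s.card) * l2 y := by
  rw [residVec, mulVec_sub, Set.indicator_sub']
  exact (l2_sub_le _ _).trans (add_le_add le_rfl
    (l2_indicator_transpose_proj_mulVec_le hδs hy hsb hcard₁ has hcard₂))

end ProjectionBound

section ListCorrelation

variable {l : Finset (Fin d)} {e : ℕ} (hδs : ripConst Φ s.card < 1) (hls : Disjoint l s)
  (hy : spt y ⊆ b) (hb : b.card ≤ e)
include hδs hls hy hb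

lemma l2_indicator_transpose_residVec_le_of_subset (hbl : b ⊆ l) :
    l2 ((l : Set (Fin d)).indicator (Φᵀ *ᵥ residVec Φ s (Φ *ᵥ y))) ≤
      (1 + ripConst Φ l.card + ripConst Φ (e + s.card) * ripConst Φ (s.card + l.card) /
        (1 - ripConst Φ s.card)) * l2 y := by
  rw [add_mul]
  exact (l2_indicator_transpose_residVec_le (t₁ := e + s.card) hδs hy (hls.symm.mono_right hbl)
    (by omega) hls le_rfl).trans
    (add_le_add_left ((satRIP_ripConst Φ _).l2_indicator_transpose_mulVec_le
      (ripConst_nonneg Φ _) (hy.trans hbl) le_rfl) _)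

lemma l2_indicator_transpose_residVec_le_of_disjoint (hbl : Disjoint l b) (hbs : Disjoint s b) :
    l2 ((l : Set (Fin d)).indicator (Φᵀ *ᵥ residVec Φ s (Φ *ᵥ y))) ≤
      (ripConst Φ (l.card + e) + ripConst Φ (e + s.card) * ripConst Φ (s.card + l.card) /
        (1 - ripConst Φ s.card)) * l2 y := by
  rw [add_mul]
  exact (l2_indicator_transpose_residVec_le (t₁ := e + s.card) hδs hy hbs (by omega) hls
    le_rfl).trans
    (add_le_add_left ((satRIP_ripConst Φ _).l2_indicator_transpose_mulVec_le_of_disjoint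
      (ripConst_nonneg Φ (l.card + e)) hy hbl (by omega)) _)

end ListCorrelation

lemma residVec_mulVec_eq_add (hδs : ripConst Φ s.card < 1) {l : Finset (Fin d)}
    (hls : Disjoint l s) (x : Fin d → ℝ) :
    residVec Φ s (Φ *ᵥ x) =
      residVec Φ s (Φ *ᵥ ((l ∩ spt x : Finset (Fin d)) : Set (Fin d)).indicator x) +
        residVec Φ s (Φ *ᵥ ((spt x \ (s ∪ l) : Finset (Fin d)) : Set (Fin d)).indicator x) := by
  conv_lhs => rw [← indicator_add_indicator_add_indicator_eq x hls]
  rw [mulVec_add, mulVec_add, residVec_add, residVec_add,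
    residVec_mulVec_of_spt_subset (isUnit_det_gram (satRIP_ripConst Φ _) hδs)
      (spt_indicator_subset s x), zero_add]

end RIP

open RIP in
/-- upper bound on the correlation of the list features with the
residual. -/
theorem stmt11 {n d : ℕ} (Φ : Matrix (Fin n) (Fin d) ℝ)
    (xs : Fin d → ℝ) (k ℓ e : ℕ)
    (s : Finset (Fin d)) (hs : s.card = k)
    (he : e = (spt xs \ s).card)
    (l : Finset (Fin d)) (hlc : l.card = ℓ) (hdisj : Disjoint l s)
    (hδk : ripConst Φ k < 1) :
    Real.sqrt (∑ i ∈ l, (_root_.col Φ i ⬝ᵥ residVec Φ s (Φ.mulVec xs)) ^ 2) ≤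
      (1 + ripConst Φ e + ripConst Φ (ℓ + e) +
          ripConst Φ (e + k) * ripConst Φ (k + ℓ) / (1 - ripConst Φ k)) *
        Real.sqrt (∑ i ∈ l ∩ spt xs, xs i ^ 2) +
      (ripConst Φ e + ripConst Φ (ℓ + e) +
          ripConst Φ (e + k) * ripConst Φ (k + ℓ) / (1 - ripConst Φ k)) *
        Real.sqrt (∑ i ∈ spt xs \ (s ∪ l), xs i ^ 2) := by
  subst hs hlc
  simp only [← l2_indicator_eq_sqrt]
  have hcard : ∀ b ⊆ spt xs \ s, b.card ≤ e := fun b hb => he ▸ Finset.card_le_card hb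
  have hu := l2_indicator_transpose_residVec_le_of_subset hδk hdisj (spt_indicator_subset _ xs)
    (hcard _ (Finset.subset_sdiff.2 ⟨Finset.inter_subset_right,
      hdisj.mono_left Finset.inter_subset_left⟩)) Finset.inter_subset_left
  have hw := l2_indicator_transpose_residVec_le_of_disjoint hδk hdisj (spt_indicator_subset _ xs)
    (hcard _ (Finset.sdiff_subset_sdiff le_rfl Finset.subset_union_left))
    (Finset.disjoint_sdiff.mono_left Finset.subset_union_right)
    (Finset.disjoint_sdiff.mono_left Finset.subset_union_left)
  have hδℓ := ripConst_mono Φ (Nat.le_add_right l.card e)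
  have hδe := ripConst_nonneg Φ e
  change l2 ((l : Set (Fin d)).indicator (Φᵀ *ᵥ residVec Φ s (Φ *ᵥ xs))) ≤ _
  rw [residVec_mulVec_eq_add hδk hdisj xs, mulVec_add, Set.indicator_add']
  exact (l2_add_le _ _).trans (add_le_add
    (hu.trans (mul_le_mul_of_nonneg_right (by linarith) (l2_nonneg _)))
    (hw.trans (mul_le_mul_of_nonneg_right (by linarith) (l2_nonneg _))))
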